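/- For every α ∈ (0,1), B > 0, and λ ≥ 0, the minimal CI lengths satisfy inf_{λ≥0} L₂(λ; α, B) ≤ inf_{λ≥0} L₁(λ; α, B) ≤ 2z_{1−α/2}, where L₁(λ;α,B) = (2/(1+2λ))[λB + z_{1−α/2}√(λ²+(1+λ)²)] and L₂(λ;α,B) = (2/(1+2λ))√(Q_{1−α}(g(λ,B))(λ²+(1+λ)²)) with g(λ,B) = λ²B²/(λ²+(1+λ)²). -/
import Mathlib


open MeasureTheory

/-- The standard normal CDF. -/
noncomputable def stdNormalCDF (x : ℝ) : ℝ :=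
  ∫ t in Set.Iic x, (Real.sqrt (2 * Real.pi))⁻¹ * Real.exp (-t ^ 2 / 2)

lemma stdNormal_integrable :
    Integrable (fun t : ℝ => (Real.sqrt (2 * Real.pi))⁻¹ * Real.exp (-t ^ 2 / 2)) := by
  have h : Integrable (fun t : ℝ => Real.exp (-(1/2) * t ^ 2)) :=
    integrable_exp_neg_mul_sq (by norm_num)
  have h2 : (fun t : ℝ => (Real.sqrt (2 * Real.pi))⁻¹ * Real.exp (-t ^ 2 / 2)) =
      fun t : ℝ => (Real.sqrt (2 * Real.pi))⁻¹ * Real.exp (-(1/2) * t ^ 2) := by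
    funext t; ring_nf
  rw [h2]
  exact h.const_mul _

lemma stdNormalCDF_strictMono : StrictMono stdNormalCDF := by
  intro x y hxy
  have hi := stdNormal_integrable
  have key : stdNormalCDF y - stdNormalCDF x =
      ∫ t in x..y, (Real.sqrt (2 * Real.pi))⁻¹ * Real.exp (-t ^ 2 / 2) :=
    intervalIntegral.integral_Iic_sub_Iic hi.integrableOn hi.integrableOn
  have hpos : 0 < ∫ t in x..y, (Real.sqrt (2 * Real.pi))⁻¹ * Real.exp (-t ^ 2 / 2) := by
    apply intervalIntegral.intervalIntegral_pos_of_pos_on hi.intervalIntegrable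
    · intro t _
      positivity
    · exact hxy
  linarith

lemma stdNormalCDF_mono : Monotone stdNormalCDF := stdNormalCDF_strictMono.monotone

/-- Key bound: `Q γ ≤ (√γ + c)²`. -/
lemma Q_bound (α c : ℝ) (hcpos : 0 < c) (Q : ℝ → ℝ)
    (hQ : ∀ γ, 0 ≤ γ →
      stdNormalCDF (Real.sqrt (Q γ) - Real.sqrt γ) -
        stdNormalCDF (-Real.sqrt (Q γ) - Real.sqrt γ) = 1 - α)
    (hQ0 : Q 0 = c ^ 2) (γ : ℝ) (hγ : 0 ≤ γ) :
    Q γ ≤ (Real.sqrt γ + c) ^ 2 := by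
  have h0 := hQ 0 le_rfl
  rw [hQ0, Real.sqrt_zero, Real.sqrt_sq hcpos.le] at h0
  simp only [sub_zero, neg_sub, zero_sub] at h0
  -- h0 : stdNormalCDF c - stdNormalCDF (-c) = 1 - α
  by_contra hlt
  push_neg at hlt
  have hsg : 0 ≤ Real.sqrt γ := Real.sqrt_nonneg γ
  have hsQ : Real.sqrt γ + c < Real.sqrt (Q γ) := by
    rw [show Real.sqrt γ + c = Real.sqrt ((Real.sqrt γ + c) ^ 2) from
      (Real.sqrt_sq (by positivity)).symm]
    exact Real.sqrt_lt_sqrt (by positivity) hlt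
  have h1 : stdNormalCDF c < stdNormalCDF (Real.sqrt (Q γ) - Real.sqrt γ) :=
    stdNormalCDF_strictMono (by linarith)
  have h2 : stdNormalCDF (-Real.sqrt (Q γ) - Real.sqrt γ) ≤ stdNormalCDF (-c) := by
    apply stdNormalCDF_mono
    linarith
  have hγeq := hQ γ hγ
  linarith

/-- The minimal CI lengths satisfy inf L₂ ≤ inf L₁ ≤ 2z_{1−α/2}.  Here
Q(γ) = Q_{1−α}(γ) is the (1−α)th quantile of χ²(1, γ) with Q(0) = z²_{1−α/2}. -/
theorem stmt_18 (α B c : ℝ) (hα : 0 < α) (hα1 : α < 1) (hB : 0 < B)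
    (hc : stdNormalCDF c = 1 - α / 2) (hcpos : 0 < c)
    (Q : ℝ → ℝ) (hQpos : ∀ γ, 0 ≤ γ → 0 < Q γ)
    (hQ : ∀ γ, 0 ≤ γ →
      stdNormalCDF (Real.sqrt (Q γ) - Real.sqrt γ) -
        stdNormalCDF (-Real.sqrt (Q γ) - Real.sqrt γ) = 1 - α)
    (hQ0 : Q 0 = c ^ 2)
    (g : ℝ → ℝ) (hg : ∀ lam, g lam = lam ^ 2 * B ^ 2 / (lam ^ 2 + (1 + lam) ^ 2))
    (L₁ L₂ : ℝ → ℝ)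
    (hL₁ : ∀ lam, L₁ lam =
      2 / (1 + 2 * lam) * (lam * B + c * Real.sqrt (lam ^ 2 + (1 + lam) ^ 2)))
    (hL₂ : ∀ lam, L₂ lam =
      2 / (1 + 2 * lam) * Real.sqrt (Q (g lam) * (lam ^ 2 + (1 + lam) ^ 2))) :
    sInf (L₂ '' Set.Ici 0) ≤ sInf (L₁ '' Set.Ici 0) ∧
    sInf (L₁ '' Set.Ici 0) ≤ 2 * c := by
  -- pointwise bound L₂ ≤ L₁ on [0,∞)
  have hpoint : ∀ lam : ℝ, 0 ≤ lam → L₂ lam ≤ L₁ lam := by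
    intro lam hlam
    have hS : (0:ℝ) < lam ^ 2 + (1 + lam) ^ 2 := by positivity
    have hgval : g lam = lam ^ 2 * B ^ 2 / (lam ^ 2 + (1 + lam) ^ 2) := hg lam
    have hgnn : 0 ≤ g lam := by rw [hgval]; positivity
    have hQle : Q (g lam) ≤ (Real.sqrt (g lam) + c) ^ 2 :=
      Q_bound α c hcpos Q hQ hQ0 _ hgnn
    have hsqrt : Real.sqrt (Q (g lam) * (lam ^ 2 + (1 + lam) ^ 2)) ≤
        lam * B + c * Real.sqrt (lam ^ 2 + (1 + lam) ^ 2) := by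
      have h1 : Q (g lam) * (lam ^ 2 + (1 + lam) ^ 2) ≤
          (Real.sqrt (g lam) + c) ^ 2 * (lam ^ 2 + (1 + lam) ^ 2) := by
        nlinarith
      calc Real.sqrt (Q (g lam) * (lam ^ 2 + (1 + lam) ^ 2))
          ≤ Real.sqrt ((Real.sqrt (g lam) + c) ^ 2 * (lam ^ 2 + (1 + lam) ^ 2)) :=
            Real.sqrt_le_sqrt h1
        _ = (Real.sqrt (g lam) + c) * Real.sqrt (lam ^ 2 + (1 + lam) ^ 2) := by
            rw [Real.sqrt_mul (by positivity), Real.sqrt_sq (by positivity)]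
        _ = Real.sqrt (g lam) * Real.sqrt (lam ^ 2 + (1 + lam) ^ 2) +
            c * Real.sqrt (lam ^ 2 + (1 + lam) ^ 2) := by ring
        _ = lam * B + c * Real.sqrt (lam ^ 2 + (1 + lam) ^ 2) := by
            congr 1
            rw [← Real.sqrt_mul hgnn, hgval, div_mul_cancel₀ _ hS.ne',
              show lam ^ 2 * B ^ 2 = (lam * B) ^ 2 by ring,
              Real.sqrt_sq (by positivity)]
    rw [hL₁, hL₂]
    have hcoef : (0:ℝ) < 2 / (1 + 2 * lam) := by positivity
    exact mul_le_mul_of_nonneg_left hsqrt hcoef.le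
  have hL₂nonneg : ∀ lam : ℝ, 0 ≤ lam → 0 ≤ L₂ lam := by
    intro lam hlam
    rw [hL₂]
    positivity
  have hL₁nonneg : ∀ lam : ℝ, 0 ≤ lam → 0 ≤ L₁ lam := by
    intro lam hlam
    exact le_trans (hL₂nonneg lam hlam) (hpoint lam hlam)
  have hbdd₂ : BddBelow (L₂ '' Set.Ici 0) := by
    refine ⟨0, ?_⟩
    rintro y ⟨lam, hlam, rfl⟩
    exact hL₂nonneg lam hlam
  have hbdd₁ : BddBelow (L₁ '' Set.Ici 0) := by
    refine ⟨0, ?_⟩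
    rintro y ⟨lam, hlam, rfl⟩
    exact hL₁nonneg lam hlam
  constructor
  · apply le_csInf ⟨L₁ 0, Set.mem_image_of_mem _ Set.self_mem_Ici⟩
    rintro y ⟨lam, hlam, rfl⟩
    exact le_trans (csInf_le hbdd₂ ⟨lam, hlam, rfl⟩) (hpoint lam hlam)
  · have h0 : L₁ 0 = 2 * c := by
      rw [hL₁]
      norm_num
    calc sInf (L₁ '' Set.Ici 0) ≤ L₁ 0 := csInf_le hbdd₁ ⟨0, Set.self_mem_Ici, rfl⟩
      _ = 2 * c := h0
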